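/- Let R be a discrete valuation ring with uniformizer u, X a set, and c a reduced cocycle on X. Define a category P(X) with object set X, with Hom(x,y) = R for all x,y, identity 1 ∈ R, and composition of g ∈ Hom(y,z) and f ∈ Hom(x,y) given by g ∘ f = u^{c(x,y,z)} · g · f ∈ Hom(x,z). Then composition is associative and unital, so P(X) is a category. -/

import Mathlib

/-! The composite of `f`, `g`, `h` either way is `h * g * f` twisted by a power of `u`; the two
exponents `c x y w + c y z w` and `c x z w + c x y z` agree by the cocycle identity at
`(x, y, z, w)`, and reducedness makes the twist trivial whenever an identity is involved. -/

theorem cocycle_add_eq_add {X : Type*} {c : X → X → X → ℕ}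
    (hcoc : ∀ w x y z : X,
      (c x y z : ℤ) - (c w y z : ℤ) + (c w x z : ℤ) - (c w x y : ℤ) = 0)
    (x y z w : X) : c x y w + c y z w = c x z w + c x y z := by
  have := hcoc x y z w
  omega

theorem pow_mul_pow_mul_assoc_of_add_eq {M : Type*} [CommMonoid M] (u f g h : M)
    {a b a' b' : ℕ} (hab : a + b = a' + b') :
    u ^ a * (u ^ b * h * g) * f = u ^ a' * h * (u ^ b' * g * f) :=
  calc u ^ a * (u ^ b * h * g) * f
      = u ^ (a + b) * (h * g * f) := by rw [pow_add]; ac_rfl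
    _ = u ^ (a' + b') * (h * g * f) := by rw [hab]
    _ = u ^ a' * h * (u ^ b' * g * f) := by rw [pow_add]; ac_rfl

theorem stmt2_general {X : Type*} (R : Type*) [CommRing R] (u : R)
    (c : X → X → X → ℕ)
    (hcoc : ∀ w x y z : X,
      (c x y z : ℤ) - (c w y z : ℤ) + (c w x z : ℤ) - (c w x y : ℤ) = 0)
    (hred : ∀ x y : X, c x x y = 0 ∧ c x y y = 0) :
    -- left identity: composing `f : x → y` with `1 ∈ Hom(y,y)`
    (∀ (x y : X) (f : R), u ^ c x y y * 1 * f = f) ∧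
    -- right identity: composing `1 ∈ Hom(x,x)` with `f : x → y`
    (∀ (x y : X) (f : R), u ^ c x x y * f * 1 = f) ∧
    -- associativity: for `f : x → y`, `g : y → z`, `h : z → w`,
    -- `(h ∘ g) ∘ f = h ∘ (g ∘ f)`
    (∀ (x y z w : X) (f g h : R),
      u ^ c x y w * (u ^ c y z w * h * g) * f =
        u ^ c x z w * h * (u ^ c x y z * g * f)) := by
  refine ⟨fun x y f => ?_, fun x y f => ?_, fun x y z w f g h => ?_⟩
  · rw [(hred x y).2, pow_zero, one_mul, one_mul]
  · rw [(hred x y).1, pow_zero, one_mul, mul_one]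
  · exact pow_mul_pow_mul_assoc_of_add_eq u f g h (cocycle_add_eq_add hcoc x y z w)

/-- For a DVR `(R, u)` and a reduced cocycle `c` on a set `X`, the composition rule
`g ∘ f = u^{c(x,y,z)} · g · f` (for `f : x → y`, `g : y → z`, identified with elements of `R`)
is unital and associative, so it defines a category `P(X)`. -/
theorem stmt2 {X : Type*} (R : Type*) [CommRing R] [IsDomain R]
    [IsDiscreteValuationRing R] (u : R) (hu : Irreducible u)
    (c : X → X → X → ℕ)
    (hcoc : ∀ w x y z : X,
      (c x y z : ℤ) - (c w y z : ℤ) + (c w x z : ℤ) - (c w x y : ℤ) = 0)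
    (hred : ∀ x y : X, c x x y = 0 ∧ c x y y = 0) :
    -- left identity: composing `f : x → y` with `1 ∈ Hom(y,y)`
    (∀ (x y : X) (f : R), u ^ c x y y * 1 * f = f) ∧
    -- right identity: composing `1 ∈ Hom(x,x)` with `f : x → y`
    (∀ (x y : X) (f : R), u ^ c x x y * f * 1 = f) ∧
    -- associativity: for `f : x → y`, `g : y → z`, `h : z → w`,
    -- `(h ∘ g) ∘ f = h ∘ (g ∘ f)`
    (∀ (x y z w : X) (f g h : R),
      u ^ c x y w * (u ^ c y z w * h * g) * f =
        u ^ c x z w * h * (u ^ c x y z * g * f)) :=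
  stmt2_general R u c hcoc hred
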